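/- Consider the map h' on {0,1,2} × {0,1} given by h'(0,0)=(1,1), h'(1,0)=(2,1), h'(2,0)=(2,0), h'(0,1)=(1,1), h'(1,1)=(0,1), h'(2,1)=(1,0). Then the set {(0,1),(1,1)} is a cyclic attractor of the asynchronous dynamics of h': each of the two states transitions only to the other, and there is no asynchronous trajectory from (0,1) to the fixed point (2,0). -/
import Mathlib


/-- Activity levels of the most permissive scheme: 0, 1, increasing, decreasing. -/
inductive MPLevel : Type
  | zero | one | inc | dec
deriving DecidableEq

/-- The set γ(x̂) of Boolean states compatible with an m.p. state x̂. -/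
def mpGamma {n : ℕ} (x : Fin n → MPLevel) : Set (Fin n → Bool) :=
  {x' | ∀ j, (x j = MPLevel.zero → x' j = false) ∧ (x j = MPLevel.one → x' j = true)}

/-- The set α(x) of Boolean states compatible with a multivalued state x. -/
def mvAlpha {n : ℕ} (m x : Fin n → ℕ) : Set (Fin n → Bool) :=
  {x' | ∀ j, (x j = 0 → x' j = false) ∧ (x j = m j → x' j = true)}

/-- Coordinatewise embedding of Boolean states into m.p. states. -/
def embBM {n : ℕ} (x : Fin n → Bool) : Fin n → MPLevel :=
  fun j => if x j then MPLevel.one else MPLevel.zero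

/-- Embedding of a Boolean state into X = ∏ {0,…,m_j}, sending 1 to m_j. -/
def embX {n : ℕ} (m : Fin n → ℕ) (x : Fin n → Bool) : Fin n → ℕ :=
  fun j => if x j then m j else 0

/-- Transition of the most permissive dynamics of f at coordinate j0. -/
def mpTransAt {n : ℕ} (f : (Fin n → Bool) → Fin n → Bool) (j0 : Fin n)
    (x y : Fin n → MPLevel) : Prop :=
  (∀ j, j ≠ j0 → y j = x j) ∧
    (((x j0 = MPLevel.zero ∨ x j0 = MPLevel.dec) ∧ (∃ x' ∈ mpGamma x, f x' j0 = true) ∧ y j0 = MPLevel.inc) ∨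
     ((x j0 = MPLevel.one ∨ x j0 = MPLevel.inc) ∧ (∃ x' ∈ mpGamma x, f x' j0 = false) ∧ y j0 = MPLevel.dec) ∨
     (x j0 = MPLevel.inc ∧ y j0 = MPLevel.one) ∨
     (x j0 = MPLevel.dec ∧ y j0 = MPLevel.zero))

/-- Transition of the most permissive dynamics of f. -/
def mpTrans {n : ℕ} (f : (Fin n → Bool) → Fin n → Bool) (x y : Fin n → MPLevel) : Prop :=
  ∃ j0, mpTransAt f j0 x y

/-- Transition of the partial J-most-permissive dynamics of f at coordinate j0. -/
def pmpTransAt {n : ℕ} (J : Set (Fin n)) (f : (Fin n → Bool) → Fin n → Bool) (j0 : Fin n)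
    (x y : Fin n → MPLevel) : Prop :=
  (∀ j, j ≠ j0 → y j = x j) ∧
    (((x j0 = MPLevel.zero ∨ x j0 = MPLevel.dec) ∧ (∃ x' ∈ mpGamma x, f x' j0 = true) ∧ y j0 = MPLevel.inc) ∨
     ((x j0 = MPLevel.one ∨ x j0 = MPLevel.inc) ∧ (∃ x' ∈ mpGamma x, f x' j0 = false) ∧ y j0 = MPLevel.dec) ∨
     (x j0 = MPLevel.inc ∧ y j0 = MPLevel.one) ∨
     (x j0 = MPLevel.dec ∧ y j0 = MPLevel.zero) ∨
     (j0 ∉ J ∧ x j0 = MPLevel.zero ∧ (∃ x' ∈ mpGamma x, f x' j0 = true) ∧ y j0 = MPLevel.one) ∨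
     (j0 ∉ J ∧ x j0 = MPLevel.one ∧ (∃ x' ∈ mpGamma x, f x' j0 = false) ∧ y j0 = MPLevel.zero))

/-- Transition of the partial J-most-permissive dynamics of f. -/
def pmpTrans {n : ℕ} (J : Set (Fin n)) (f : (Fin n → Bool) → Fin n → Bool)
    (x y : Fin n → MPLevel) : Prop :=
  ∃ j0, pmpTransAt J f j0 x y

/-- A state of X_{J m.p.}: coordinates outside J are Boolean. -/
def inXJ {n : ℕ} (J : Set (Fin n)) (x : Fin n → MPLevel) : Prop :=
  ∀ j, j ∉ J → (x j = MPLevel.zero ∨ x j = MPLevel.one)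

/-- Asynchronous transition of a Boolean model f. -/
def asyncTransB {n : ℕ} (f : (Fin n → Bool) → Fin n → Bool) (x y : Fin n → Bool) : Prop :=
  ∃ j0, f x j0 ≠ x j0 ∧ y j0 = f x j0 ∧ ∀ j, j ≠ j0 → y j = x j

/-- Asynchronous transition of a multivalued model h (one coordinate moves by 1 toward its target). -/
def asyncTrans {n : ℕ} (h : (Fin n → ℕ) → Fin n → ℕ) (x y : Fin n → ℕ) : Prop :=
  ∃ j0, h x j0 ≠ x j0 ∧ (∀ j, j ≠ j0 → y j = x j) ∧
    ((x j0 < h x j0 ∧ y j0 = x j0 + 1) ∨ (h x j0 < x j0 ∧ y j0 = x j0 - 1))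

/-- An m.p. state x̂ is compatible with a multivalued state x. -/
def mpCompat {n : ℕ} (m x : Fin n → ℕ) (xh : Fin n → MPLevel) : Prop :=
  ∀ j, (x j = 0 → xh j = MPLevel.zero) ∧ (x j = m j → xh j = MPLevel.one) ∧
    (0 < x j → x j < m j → (xh j = MPLevel.inc ∨ xh j = MPLevel.dec))

/-- h is a multivalued model on X = ∏ {0,…,m_j}: maps X to X, moving each coordinate by at most 1. -/
def isMVModel {n : ℕ} (m : Fin n → ℕ) (h : (Fin n → ℕ) → Fin n → ℕ) : Prop :=
  ∀ x, (∀ j, x j ≤ m j) → ∀ j, h x j ≤ m j ∧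
    (h x j = x j ∨ h x j = x j + 1 ∨ h x j + 1 = x j)

/-- h is a multivalued refinement of the Boolean model f. -/
def isRefinement {n : ℕ} (m : Fin n → ℕ) (f : (Fin n → Bool) → Fin n → Bool)
    (h : (Fin n → ℕ) → Fin n → ℕ) : Prop :=
  ∀ x, (∀ j, x j ≤ m j) → ∀ j,
    (h x j < x j → ∃ x' ∈ mvAlpha m x, f x' j = false ∧ x' j = true) ∧
    (x j < h x j → ∃ x' ∈ mvAlpha m x, f x' j = true ∧ x' j = false)

/-- A literal in a DNF: a regulator index, a polarity, and a threshold (used in the multivalued reading). -/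
structure Lit (n : ℕ) where
  idx : Fin n
  pos : Bool
  thr : ℕ

/-- Boolean evaluation of a literal (threshold ignored). -/
def evalLitB {n : ℕ} (x : Fin n → Bool) (l : Lit n) : Bool :=
  if l.pos then x l.idx else !(x l.idx)

/-- Multivalued evaluation of a literal: x_idx ≥ thr+1 for a positive literal, x_idx < thr+1 otherwise. -/
def evalLitM {n : ℕ} (x : Fin n → ℕ) (l : Lit n) : Bool :=
  if l.pos then decide (l.thr + 1 ≤ x l.idx) else decide (x l.idx < l.thr + 1)

/-- Boolean evaluation of a DNF (list of conjunctive clauses). -/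
def evalDNFB {n : ℕ} (x : Fin n → Bool) (φ : List (List (Lit n))) : Bool :=
  φ.any fun c => c.all (evalLitB x)

/-- Multivalued evaluation of a DNF via the thresholds. -/
def evalDNFM {n : ℕ} (x : Fin n → ℕ) (φ : List (List (Lit n))) : Bool :=
  φ.any fun c => c.all (evalLitM x)

/-- Refinement built from the DNF threshold parameterisation:
h_j(x) = max(0, min(m_j, x_j + H_j(x))) with H_j(x) = +1 iff the multivalued DNF of f_j is true. -/
def hDNF {n : ℕ} (m : Fin n → ℕ) (φ : Fin n → List (List (Lit n)))
    (x : Fin n → ℕ) : Fin n → ℕ :=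
  fun j => if evalDNFM x (φ j) then min (m j) (x j + 1) else x j - 1

/-- The second counterexample multivalued map h' on {0,1,2} × {0,1}. -/
def hCex' (x : Fin 2 → ℕ) : Fin 2 → ℕ :=
  if x 1 = 0 then
    (if x 0 = 0 then ![1, 1] else if x 0 = 1 then ![2, 1] else ![2, 0])
  else
    (if x 0 = 0 then ![1, 1] else if x 0 = 1 then ![0, 1] else ![1, 0])

lemma hC01 : hCex' ![0, 1] = ![1, 1] := by simp [hCex']
lemma hC11 : hCex' ![1, 1] = ![0, 1] := by simp [hCex']
lemma hC20 : hCex' ![2, 0] = ![2, 0] := by simp [hCex']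

lemma trans01 : ∀ y : Fin 2 → ℕ, asyncTrans hCex' ![0, 1] y ↔ y = ![1, 1] := by
  intro y
  constructor
  · rintro ⟨j0, hne, hoth, hcase⟩
    rw [hC01] at hne hcase
    fin_cases j0
    · have h1 : y 1 = 1 := by simpa using hoth 1 (by decide)
      rcases hcase with ⟨_, h0⟩ | ⟨h, _⟩
      · funext j; fin_cases j <;> simp_all
      · simp at h
    · simp at hne
  · rintro rfl
    exact ⟨0, by rw [hC01]; decide, by intro j hj; fin_cases j <;> simp_all,
      Or.inl ⟨by rw [hC01]; decide, by decide⟩⟩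

lemma trans11 : ∀ y : Fin 2 → ℕ, asyncTrans hCex' ![1, 1] y ↔ y = ![0, 1] := by
  intro y
  constructor
  · rintro ⟨j0, hne, hoth, hcase⟩
    rw [hC11] at hne hcase
    fin_cases j0
    · have h1 : y 1 = 1 := by simpa using hoth 1 (by decide)
      rcases hcase with ⟨h, _⟩ | ⟨_, h0⟩
      · simp at h
      · funext j; fin_cases j <;> simp_all
    · simp at hne
  · rintro rfl
    exact ⟨0, by rw [hC11]; decide, by intro j hj; fin_cases j <;> simp_all,
      Or.inr ⟨by rw [hC11]; decide, by decide⟩⟩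

/-- {(0,1),(1,1)} is a cyclic attractor of the asynchronous dynamics of h':
each of the two states transitions exactly to the other, and the fixed point (2,0) is not
reachable from (0,1). -/
theorem cex'_cyclic_attractor :
    (∀ y : Fin 2 → ℕ, asyncTrans hCex' ![0, 1] y ↔ y = ![1, 1]) ∧
    (∀ y : Fin 2 → ℕ, asyncTrans hCex' ![1, 1] y ↔ y = ![0, 1]) ∧
    hCex' ![2, 0] = ![2, 0] ∧
    ¬ Relation.ReflTransGen (asyncTrans hCex') ![0, 1] ![2, 0] := by
  refine ⟨trans01, trans11, hC20, ?_⟩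
  intro hreach
  have key : ∀ z, Relation.ReflTransGen (asyncTrans hCex') ![0, 1] z →
      z = ![0, 1] ∨ z = ![1, 1] := by
    intro z hz
    induction hz with
    | refl => exact Or.inl rfl
    | tail _ hstep ih =>
      rcases ih with rfl | rfl
      · exact Or.inr ((trans01 _).mp hstep)
      · exact Or.inl ((trans11 _).mp hstep)
  rcases key _ hreach with h | h <;>
    exact absurd (congrFun h 0) (by decide)
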